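/- arXiv:2510.27160 — 2 statements merged into one kernel-verified Lean document; each statement's English description precedes it below -/
import Mathlib

section
/- Let V be a finite-dimensional real inner product space, S ⊆ V a nonempty closed convex set, and Δ ⊆ ℝ^n a nonempty compact set. Let f : V → ℝ be convex, subdifferentiable at every point of S, with ‖d‖ ≤ L_f for all x ∈ S and d ∈ ∂f(x). For every δ ∈ Δ let g(·;δ) : V → ℝ be convex, subdifferentiable at every point of S, with ‖d‖ ≤ L_g for all x ∈ S and d ∈ ∂_x g(x;δ); for every x ∈ S assume g(x;·) is continuous on Δ. Set G(x) := max_{δ∈Δ} g(x;δ) and L := max{L_f, L_g}, and suppose the set S* of minimizers of f over {x ∈ S : G(x) ≤ 0} is nonempty with optimal value f*. Fix ε > 0, α ≥ 0, and sequences (x_k) in S, (δ_k) in Δ and (d_k) in V such that for every k: G(x_k) − g(x_k;δ_k) ≤ αε, and if g(x_k;δ_k) ≤ ε then d_k ∈ ∂f(x_k), d_k ≠ 0, and x_{k+1} = P_S(x_k − (ε/‖d_k‖²) d_k); otherwise d_k ∈ ∂_x g(x_k;δ_k), d_k ≠ 0, and x_{k+1} = P_S(x_k − (g(x_k;δ_k)/‖d_k‖²)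 d_k). Then for every positive integer N with N ≥ L² · dist(x_1, S*)² / ε², the set I_N := {k ∈ {1,…,N} : g(x_k;δ_k) ≤ ε} is nonempty, and for every k* ∈ I_N minimizing f(x_k) over k ∈ I_N one has f(x_{k*}) ≤ f* + ε and G(x_{k*}) ≤ (1+α)ε. -/
/-!
While no iterate `x_k` with `g(x_k; δ_k) ≤ ε` has `f(x_k) ≤ f* + ε`, every projected step
shrinks the squared distance to each point `x*` of `S*` by more than `ε² / L²`: the projection
onto `S` is nonexpansive towards `x*`, and `⟨d_k, x_k - x*⟩` is at least `f(x_k) - f* > ε` for an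
objective step and at least `g(x_k; δ_k) > ε` for a constraint step, because
`g(x*; δ_k) ≤ G(x*) ≤ 0`. After `N` steps this would force `N ε² / L² < dist(x₁, S*)²`,
contradicting the choice of `N`. So some `k ≤ N` has `g(x_k; δ_k) ≤ ε` and `f(x_k) ≤ f* + ε`,
the minimizer `k*` inherits the bound on `f`, and `G(x_{k*}) ≤ g(x_{k*}; δ_{k*}) + αε ≤ (1 + α)ε`.
-/

/-- The subdifferential of `f : V → ℝ` at `x`. -/
def subdiff {V : Type*} [NormedAddCommGroup V] [InnerProductSpace ℝ V]
    (f : V → ℝ) (x : V) : Set V :=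
  {d | ∀ y, f x + (inner ℝ d (y - x) : ℝ) ≤ f y}

open Finset

theorem sum_Icc_le_sub_of_le_sub {a D : ℕ → ℝ} (N : ℕ)
    (h : ∀ k ∈ Icc 1 N, a (k + 1) ≤ a k - D k) : ∑ k ∈ Icc 1 N, D k ≤ a 1 - a (N + 1) := by
  induction N with
  | zero => simp
  | succ N ih =>
    rw [sum_Icc_succ_top (by omega)]
    have hlast := h (N + 1) (mem_Icc.mpr ⟨by omega, le_rfl⟩)
    have hprev := ih fun k hk => h k (mem_Icc.mpr ⟨(mem_Icc.mp hk).1, by grind⟩)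
    linarith

theorem le_sq_infDist {α : Type*} [PseudoMetricSpace α] {T : Set α} (hT : T.Nonempty) {x : α}
    {B : ℝ} (h : ∀ y ∈ T, B ≤ dist x y ^ 2) : B ≤ Metric.infDist x T ^ 2 := by
  have hsqrt : √B ≤ Metric.infDist x T := (Metric.le_infDist hT).mpr fun y hy => by
    rw [← Real.sqrt_sq dist_nonneg]
    exact Real.sqrt_le_sqrt (h y hy)
  rcases lt_or_ge B 0 with hB | hB
  · exact hB.le.trans (sq_nonneg _)
  · calc B = √B ^ 2 := (Real.sq_sqrt hB).symm
      _ ≤ Metric.infDist x T ^ 2 := pow_le_pow_left₀ (Real.sqrt_nonneg B) hsqrt 2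

theorem nat_mul_lt_mul_sq_infDist {E : Type*} [SeminormedAddCommGroup E] {x : ℕ → E}
    {T : Set E} (hT : T.Nonempty) {N : ℕ} (hN : 1 ≤ N) {ρ κ : ℝ} (hκ : 0 ≤ κ)
    (h : ∀ k ∈ Icc 1 N, ∃ D, ρ < κ * D ∧ ∀ y ∈ T, ‖x (k + 1) - y‖ ^ 2 ≤ ‖x k - y‖ ^ 2 - D) :
    N * ρ < κ * Metric.infDist (x 1) T ^ 2 := by
  choose! D hρD hD using h
  have hsum : ∑ k ∈ Icc 1 N, D k ≤ Metric.infDist (x 1) T ^ 2 :=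
    le_sq_infDist hT fun y hy => by
      rw [dist_eq_norm]
      have := sum_Icc_le_sub_of_le_sub (a := fun k => ‖x k - y‖ ^ 2) N
        fun k hk => hD k hk y hy
      linarith [sq_nonneg ‖x (N + 1) - y‖]
  calc (N : ℝ) * ρ = ∑ _k ∈ Icc 1 N, ρ := by simp
    _ < ∑ k ∈ Icc 1 N, κ * D k := sum_lt_sum_of_nonempty ⟨1, mem_Icc.mpr ⟨le_rfl, hN⟩⟩ hρD
    _ = κ * ∑ k ∈ Icc 1 N, D k := (mul_sum _ _ _).symm
    _ ≤ κ * Metric.infDist (x 1) T ^ 2 := mul_le_mul_of_nonneg_left hsum hκ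

section ProjectedSubgradient

variable {V : Type*} [NormedAddCommGroup V] [InnerProductSpace ℝ V]

theorem sub_le_inner_of_mem_subdiff {φ : V → ℝ} {x d : V} (hd : d ∈ subdiff φ x) (y : V) :
    φ x - φ y ≤ inner ℝ d (x - y) := by
  have h := hd y
  rw [← neg_sub x y, inner_neg_right] at h
  linarith

theorem Convex.norm_sub_le_of_isNearest {S : Set V} (hS : Convex ℝ S) {y p z : V} (hp : p ∈ S)
    (hmin : ∀ w ∈ S, ‖y - p‖ ≤ ‖y - w‖) (hz : z ∈ S) : ‖p - z‖ ≤ ‖y - z‖ := by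
  have : Nonempty S := ⟨⟨p, hp⟩⟩
  have hinf : ‖y - p‖ = ⨅ w : S, ‖y - w‖ :=
    le_antisymm (le_ciInf fun w => hmin w w.2)
      (ciInf_le (f := fun w : S => ‖y - w‖) ⟨0, by rintro _ ⟨w, rfl⟩; exact norm_nonneg _⟩
        ⟨p, hp⟩)
  have hobtuse : inner ℝ (y - p) (z - p) ≤ (0 : ℝ) :=
    (norm_eq_iInf_iff_real_inner_le_zero hS hp).mp hinf z hz
  have hexpand := norm_sub_sq_real (y - p) (z - p)
  rw [sub_sub_sub_cancel_right] at hexpand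
  rw [← sq_le_sq₀ (norm_nonneg _) (norm_nonneg _), norm_sub_rev p z]
  nlinarith [sq_nonneg ‖y - p‖]

theorem sq_norm_sub_smul_le {w v : V} {t c : ℝ} (ht : 0 ≤ t) (hc : c ≤ inner ℝ v w) :
    ‖w - t • v‖ ^ 2 ≤ ‖w‖ ^ 2 - 2 * t * c + t ^ 2 * ‖v‖ ^ 2 := by
  rw [norm_sub_sq_real, real_inner_smul_right, norm_smul, real_inner_comm, mul_pow,
    Real.norm_eq_abs, sq_abs]
  nlinarith [mul_le_mul_of_nonneg_left hc ht]

theorem Convex.exists_sq_norm_proj_step_sub_le {S T : Set V} (hS : Convex ℝ S) (hTS : T ⊆ S)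
    {proj : V → V} (hproj : ∀ y, proj y ∈ S ∧ ∀ z ∈ S, ‖y - proj y‖ ≤ ‖y - z‖)
    {u v : V} {ε s c L : ℝ} (hε : 0 < ε) (hεs : ε ≤ s) (hsc : s ≤ c) (hεc : ε < c)
    (hv : v ≠ 0) (hvL : ‖v‖ ≤ L) (hcv : ∀ y ∈ T, c ≤ inner ℝ v (u - y)) :
    ∃ D, ε ^ 2 < L ^ 2 * D ∧
      ∀ y ∈ T, ‖proj (u - (s / ‖v‖ ^ 2) • v) - y‖ ^ 2 ≤ ‖u - y‖ ^ 2 - D := by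
  have hv2 : 0 < ‖v‖ ^ 2 := by positivity
  refine ⟨s * (2 * c - s) / ‖v‖ ^ 2, ?_, fun y hy => ?_⟩
  · -- `s (2c - s) - ε² = (s - ε)(2c - s - ε) + 2ε(c - ε)`
    have hgain : ε ^ 2 < s * (2 * c - s) := by
      nlinarith [mul_nonneg (sub_nonneg.mpr hεs) (by linarith : 0 ≤ 2 * c - s - ε)]
    have hvL2 : ‖v‖ ^ 2 ≤ L ^ 2 := pow_le_pow_left₀ (norm_nonneg v) hvL 2
    calc ε ^ 2 < ‖v‖ ^ 2 * (s * (2 * c - s) / ‖v‖ ^ 2) := by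
          rwa [mul_div_cancel₀ _ hv2.ne']
      _ ≤ L ^ 2 * (s * (2 * c - s) / ‖v‖ ^ 2) :=
          mul_le_mul_of_nonneg_right hvL2 (div_nonneg (by nlinarith) hv2.le)
  · have hnear := hS.norm_sub_le_of_isNearest (hproj (u - (s / ‖v‖ ^ 2) • v)).1
      (hproj _).2 (hTS hy)
    rw [sub_right_comm] at hnear
    have hstep := sq_norm_sub_smul_le (w := u - y) (div_nonneg (hε.le.trans hεs) hv2.le)
      (hcv y hy)
    calc ‖proj (u - (s / ‖v‖ ^ 2) • v) - y‖ ^ 2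
        ≤ ‖u - y - (s / ‖v‖ ^ 2) • v‖ ^ 2 := pow_le_pow_left₀ (norm_nonneg _) hnear 2
      _ ≤ ‖u - y‖ ^ 2 - s * (2 * c - s) / ‖v‖ ^ 2 := by
          convert hstep using 1
          field_simp
          ring

end ProjectedSubgradient

theorem stmt1_general {V : Type*} [NormedAddCommGroup V] [InnerProductSpace ℝ V]
    {n : ℕ}
    -- the constraint set S
    (S : Set V) (hScv : Convex ℝ S)
    -- the compact index set Δ
    (Δ : Set (EuclideanSpace ℝ (Fin n))) (hΔcp : IsCompact Δ)
    -- the objective f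
    (f : V → ℝ)
    (Lf : ℝ)
    (hLf : ∀ x ∈ S, ∀ d ∈ subdiff f x, ‖d‖ ≤ Lf)
    -- the constraint functions g(·;δ)
    (g : V → EuclideanSpace ℝ (Fin n) → ℝ)
    (Lg : ℝ)
    (hLg : ∀ δ ∈ Δ, ∀ x ∈ S, ∀ d ∈ subdiff (fun z => g z δ) x, ‖d‖ ≤ Lg)
    (hgcont : ∀ x ∈ S, ContinuousOn (g x) Δ)
    -- G and L
    (G : V → ℝ) (hG : ∀ x, G x = sSup (g x '' Δ))
    (L : ℝ) (hL : L = max Lf Lg)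
    -- the set of optimal solutions and the optimal value
    (Sstar : Set V)
    (hSstar : Sstar = {x | x ∈ S ∧ G x ≤ 0 ∧ ∀ y ∈ S, G y ≤ 0 → f x ≤ f y})
    (hSstarne : Sstar.Nonempty)
    (fstar : ℝ) (hfstar : ∀ x ∈ Sstar, f x = fstar)
    -- the tolerance, the metric projection onto S, and the iterates
    (ε : ℝ) (hε : 0 < ε) (α : ℝ)
    (proj : V → V)
    (hproj : ∀ y, proj y ∈ S ∧ ∀ z ∈ S, ‖y - proj y‖ ≤ ‖y - z‖)
    (x : ℕ → V) (δ : ℕ → EuclideanSpace ℝ (Fin n)) (d : ℕ → V)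
    (hxS : ∀ k, 1 ≤ k → x k ∈ S) (hδΔ : ∀ k, 1 ≤ k → δ k ∈ Δ)
    (hξ : ∀ k, 1 ≤ k → G (x k) - g (x k) (δ k) ≤ α * ε)
    (hstep : ∀ k, 1 ≤ k →
      (g (x k) (δ k) ≤ ε →
        d k ∈ subdiff f (x k) ∧ d k ≠ 0 ∧
          x (k + 1) = proj (x k - (ε / ‖d k‖ ^ 2) • d k)) ∧
      (ε < g (x k) (δ k) →
        d k ∈ subdiff (fun z => g z (δ k)) (x k) ∧ d k ≠ 0 ∧
          x (k + 1) = proj (x k - (g (x k) (δ k) / ‖d k‖ ^ 2) • d k)))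
    -- the number of iterations
    (N : ℕ) (hN1 : 1 ≤ N)
    (hN : (N : ℝ) ≥ L ^ 2 * Metric.infDist (x 1) Sstar ^ 2 / ε ^ 2) :
    (∃ k ∈ Finset.Icc 1 N, g (x k) (δ k) ≤ ε) ∧
      ∀ kstar ∈ Finset.Icc 1 N, g (x kstar) (δ kstar) ≤ ε →
        (∀ k ∈ Finset.Icc 1 N, g (x k) (δ k) ≤ ε → f (x kstar) ≤ f (x k)) →
        f (x kstar) ≤ fstar + ε ∧ G (x kstar) ≤ (1 + α) * ε := by
  have hSstarS : Sstar ⊆ S := hSstar ▸ fun y hy => hy.1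
  have hgood : ∃ k ∈ Icc 1 N, g (x k) (δ k) ≤ ε ∧ f (x k) ≤ fstar + ε := by
    by_contra! hbad
    have hdescent : ∀ k ∈ Icc 1 N, ∃ D, ε ^ 2 < L ^ 2 * D ∧
        ∀ y ∈ Sstar, ‖x (k + 1) - y‖ ^ 2 ≤ ‖x k - y‖ ^ 2 - D := by
      intro k hk
      have hk1 := (mem_Icc.mp hk).1
      by_cases hgk : g (x k) (δ k) ≤ ε
      · obtain ⟨hd, hd0, hnext⟩ := (hstep k hk1).1 hgk
        have hgap : ε < f (x k) - fstar := by linarith [hbad k hk hgk]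
        rw [hnext]
        refine hScv.exists_sq_norm_proj_step_sub_le hSstarS hproj hε le_rfl hgap.le hgap hd0
          ((hLf _ (hxS k hk1) _ hd).trans (hL ▸ le_max_left _ _)) fun y hy => ?_
        rw [← hfstar y hy]
        exact sub_le_inner_of_mem_subdiff hd y
      · rw [not_le] at hgk
        obtain ⟨hd, hd0, hnext⟩ := (hstep k hk1).2 hgk
        rw [hnext]
        refine hScv.exists_sq_norm_proj_step_sub_le hSstarS hproj hε hgk.le le_rfl hgk hd0
          ((hLg _ (hδΔ k hk1) _ (hxS k hk1) _ hd).trans (hL ▸ le_max_right _ _))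
          fun y hy => ?_
        obtain ⟨hyS, hGy, -⟩ := hSstar ▸ hy
        have hgy : g y (δ k) ≤ G y := hG y ▸
          le_csSup (hΔcp.image_of_continuousOn (hgcont y hyS)).bddAbove ⟨δ k, hδΔ k hk1, rfl⟩
        linarith [sub_le_inner_of_mem_subdiff hd y]
    have hlt := nat_mul_lt_mul_sq_infDist hSstarne hN1 (sq_nonneg L) hdescent
    rw [ge_iff_le, div_le_iff₀ (by positivity)] at hN
    linarith
  obtain ⟨k, hk, hgk, hfk⟩ := hgood
  refine ⟨⟨k, hk, hgk⟩, fun kstar hkstar _ hmin => ⟨(hmin k hk hgk).trans hfk, ?_⟩⟩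
  linarith [hξ kstar (mem_Icc.mp hkstar).1]

theorem stmt1 {V : Type*} [NormedAddCommGroup V] [InnerProductSpace ℝ V]
    [FiniteDimensional ℝ V] {n : ℕ}
    -- the constraint set S
    (S : Set V) (hSne : S.Nonempty) (hScl : IsClosed S) (hScv : Convex ℝ S)
    -- the compact index set Δ
    (Δ : Set (EuclideanSpace ℝ (Fin n))) (hΔne : Δ.Nonempty) (hΔcp : IsCompact Δ)
    -- the objective f
    (f : V → ℝ) (hfcvx : ConvexOn ℝ Set.univ f)
    (Lf : ℝ) (hfsub : ∀ x ∈ S, (subdiff f x).Nonempty)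
    (hLf : ∀ x ∈ S, ∀ d ∈ subdiff f x, ‖d‖ ≤ Lf)
    -- the constraint functions g(·;δ)
    (g : V → EuclideanSpace ℝ (Fin n) → ℝ)
    (hgcvx : ∀ δ ∈ Δ, ConvexOn ℝ Set.univ fun x => g x δ)
    (Lg : ℝ) (hgsub : ∀ δ ∈ Δ, ∀ x ∈ S, (subdiff (fun z => g z δ) x).Nonempty)
    (hLg : ∀ δ ∈ Δ, ∀ x ∈ S, ∀ d ∈ subdiff (fun z => g z δ) x, ‖d‖ ≤ Lg)
    (hgcont : ∀ x ∈ S, ContinuousOn (g x) Δ)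
    -- G and L
    (G : V → ℝ) (hG : ∀ x, G x = sSup (g x '' Δ))
    (L : ℝ) (hL : L = max Lf Lg)
    -- the set of optimal solutions and the optimal value
    (Sstar : Set V)
    (hSstar : Sstar = {x | x ∈ S ∧ G x ≤ 0 ∧ ∀ y ∈ S, G y ≤ 0 → f x ≤ f y})
    (hSstarne : Sstar.Nonempty)
    (fstar : ℝ) (hfstar : ∀ x ∈ Sstar, f x = fstar)
    -- the tolerance, the metric projection onto S, and the iterates
    (ε : ℝ) (hε : 0 < ε) (α : ℝ) (hα : 0 ≤ α)
    (proj : V → V)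
    (hproj : ∀ y, proj y ∈ S ∧ ∀ z ∈ S, ‖y - proj y‖ ≤ ‖y - z‖)
    (x : ℕ → V) (δ : ℕ → EuclideanSpace ℝ (Fin n)) (d : ℕ → V)
    (hxS : ∀ k, 1 ≤ k → x k ∈ S) (hδΔ : ∀ k, 1 ≤ k → δ k ∈ Δ)
    (hξ : ∀ k, 1 ≤ k → G (x k) - g (x k) (δ k) ≤ α * ε)
    (hstep : ∀ k, 1 ≤ k →
      (g (x k) (δ k) ≤ ε →
        d k ∈ subdiff f (x k) ∧ d k ≠ 0 ∧
          x (k + 1) = proj (x k - (ε / ‖d k‖ ^ 2) • d k)) ∧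
      (ε < g (x k) (δ k) →
        d k ∈ subdiff (fun z => g z (δ k)) (x k) ∧ d k ≠ 0 ∧
          x (k + 1) = proj (x k - (g (x k) (δ k) / ‖d k‖ ^ 2) • d k)))
    -- the number of iterations
    (N : ℕ) (hN1 : 1 ≤ N)
    (hN : (N : ℝ) ≥ L ^ 2 * Metric.infDist (x 1) Sstar ^ 2 / ε ^ 2) :
    (∃ k ∈ Finset.Icc 1 N, g (x k) (δ k) ≤ ε) ∧
      ∀ kstar ∈ Finset.Icc 1 N, g (x kstar) (δ kstar) ≤ ε →
        (∀ k ∈ Finset.Icc 1 N, g (x k) (δ k) ≤ ε → f (x kstar) ≤ f (x k)) →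
        f (x kstar) ≤ fstar + ε ∧ G (x kstar) ≤ (1 + α) * ε :=
  stmt1_general S hScv Δ hΔcp f Lf hLf g Lg hLg hgcont G hG L hL Sstar hSstar hSstarne fstar hfstar
    ε hε α proj hproj x δ d hxS hδΔ hξ hstep N hN1 hN
end

section
/- Let n ≥ 2, let Q be a real symmetric n×n matrix with Q_{kk} > min_{1≤i≤j≤n} Q_{ij} for every k (so that γ̲(Q) is finite), let r ≥ 2 be an integer, let φ ∈ (0,1), and let M be a positive integer with M ≥ m( n/|Δ_r^{n-1}|, φ ). If δ_1, …, δ_M are independent random vectors each uniformly distributed on the finite set Δ_r^{n-1}, then with probability at least 1 − φ it holds that min_{1≤i≤M} δ_i^T Q δ_i − γ(Q) ≤ (1/r) ( √2·K(Q) + max_{1≤i≤n} Q_{ii} − γ̲(Q) ). In particular, if moreover ε > 0 and r ≥ (1/ε)( max_{1≤i≤n} Q_{ii} − γ̲(Q) ) with max_{1≤i≤n} Q_{ii} − γ̲(Q) > 0, then with probability at least 1 − φ, min_{1≤i≤M} δ_i^T Q δ_i − γ(Q) ≤ ( √2·K(Q)/( max_{1≤i≤n} Q_{ii} − γ̲(Q)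 ) + 1 ) · ε. -/
open MeasureTheory Matrix

/-- The standard simplex `Δ^{n-1}`, viewed inside Euclidean space. -/
def stdSimplexE (n : ℕ) : Set (EuclideanSpace ℝ (Fin n)) :=
  {δ | (∀ i, 0 ≤ δ i) ∧ ∑ i, δ i = 1}

/-- The regular grid `Δ_r^{n-1}` of the standard simplex: points of the simplex all of whose
coordinates become nonnegative integers after multiplication by `r`. -/
def regGrid (n r : ℕ) : Set (EuclideanSpace ℝ (Fin n)) :=
  {δ | (∀ i, 0 ≤ δ i) ∧ (∑ i, δ i) = 1 ∧ ∀ i, ∃ m : ℕ, (r : ℝ) * δ i = m}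

/-- The uniform distribution on the (finite) regular grid `Δ_r^{n-1}`: counting measure
restricted to the grid and normalized to a probability measure. -/
noncomputable def uniformGrid (n r : ℕ) : Measure (EuclideanSpace ℝ (Fin n)) :=
  (Measure.count (regGrid n r))⁻¹ • Measure.count.restrict (regGrid n r)

/-!
Averaging `δ ↦ δᵀQδ` over the empirical distribution of `r` independent draws from a point `x` of
the simplex gives `(1/r) ∑ₖ Qₖₖ xₖ + (1 - 1/r) xᵀQx`, so the minimiser `δ₀` of the quadratic form on
the grid satisfies `δ₀ᵀQδ₀ - γ(Q) ≤ (1/r)(max Qₖₖ - γ̲(Q))`. Moving mass `1/r` from a positive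
coordinate of `δ₀` to coordinate `k` gives `n` distinct grid points at distance at most `√2/r` from
`δ₀`, and on the simplex the quadratic form is `K(Q)`-Lipschitz, because
`xᵀQx - yᵀQy = (x - y)ᵀQ(x + y)` and `‖Q(x + y)‖ ≤ K(Q)`. All `M` uniform samples miss these `n`
points with probability `(1 - n/|Δ_r|)^M ≤ φ`.
-/

open Finset ProbabilityTheory

namespace Matrix

variable {ι : Type*} [Fintype ι] {Q : Matrix ι ι ℝ}

theorem IsSymm.iInf_le [LinearOrder ι] (hQ : Q.IsSymm) (i j : ι) :
    ⨅ p : {p : ι × ι // p.1 ≤ p.2}, Q p.1.1 p.1.2 ≤ Q i j := by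
  rcases le_total i j with h | h
  · exact ciInf_le (Set.finite_range _).bddBelow (⟨(i, j), h⟩ : {p : ι × ι // p.1 ≤ p.2})
  · exact hQ.apply i j ▸
      ciInf_le (Set.finite_range _).bddBelow (⟨(j, i), h⟩ : {p : ι × ι // p.1 ≤ p.2})

variable (Q) in
theorem dotProduct_mulVec_self_eq_sum (x : ι → ℝ) :
    x ⬝ᵥ Q *ᵥ x = ∑ i, ∑ j, Q i j * (x i * x j) := by
  simp only [dotProduct, mulVec, Finset.mul_sum]
  exact sum_congr rfl fun i _ => sum_congr rfl fun j _ => by ring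

theorem add_inv_sum_inv_le_dotProduct_mulVec {m : ℝ} (hm : ∀ i j, m ≤ Q i j)
    (hdiag : ∀ k, m < Q k k) {x : ι → ℝ} (hx : x ∈ stdSimplex ℝ ι) :
    m + (∑ k, (Q k k - m)⁻¹)⁻¹ ≤ x ⬝ᵥ Q *ᵥ x := by
  have hsedrakyan := sq_sum_div_le_sum_sq_div univ x
    (g := fun k => (Q k k - m)⁻¹) fun k _ => inv_pos.2 (sub_pos.2 (hdiag k))
  simp only [hx.2, one_pow, one_div, div_inv_eq_mul] at hsedrakyan
  have hdiag_le : ∑ i, x i ^ 2 * (Q i i - m) ≤ ∑ i, ∑ j, (Q i j - m) * (x i * x j) :=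
    sum_le_sum fun i _ => (single_le_sum (f := fun j => (Q i j - m) * (x i * x j))
      (fun j _ => mul_nonneg (sub_nonneg.2 (hm i j)) (mul_nonneg (hx.1 i) (hx.1 j)))
      (mem_univ i)).trans_eq' (by ring)
  have hsplit : x ⬝ᵥ Q *ᵥ x
      = m * (∑ i, x i) * (∑ j, x j) + ∑ i, ∑ j, (Q i j - m) * (x i * x j) := by
    simp only [dotProduct_mulVec_self_eq_sum, sum_mul, mul_sum, ← sum_add_distrib]
    exact sum_congr rfl fun i _ => sum_congr rfl fun j _ => by ring
  rw [hsplit, hx.2]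
  linarith

theorem dotProduct_mulVec_sub_dotProduct_mulVec (hQ : Q.IsSymm) (x y : ι → ℝ) :
    x ⬝ᵥ Q *ᵥ x - y ⬝ᵥ Q *ᵥ y = (x - y) ⬝ᵥ Q *ᵥ (x + y) := by
  have hswap : y ⬝ᵥ Q *ᵥ x = x ⬝ᵥ Q *ᵥ y := by
    rw [dotProduct_mulVec, dotProduct_comm, ← mulVec_transpose, hQ.eq]
  simp only [mulVec_add, dotProduct_add, sub_dotProduct, hswap]
  ring

theorem norm_toLp_mulVec_le {v : ι → ℝ} (hv : ∀ j, 0 ≤ v j) :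
    ‖(WithLp.toLp 2 (Q *ᵥ v) : EuclideanSpace ℝ ι)‖
      ≤ (∑ j, v j) * ⨆ j, √(∑ k, Q k j ^ 2) := by
  have hcol : ∀ j,
      ‖(WithLp.toLp 2 fun k => Q k j : EuclideanSpace ℝ ι)‖ ≤ ⨆ j, √(∑ k, Q k j ^ 2) :=
    fun j => (EuclideanSpace.norm_eq _).trans_le <| by
      simpa only [Real.norm_eq_abs, sq_abs] using
        le_ciSup (Set.finite_range fun j => √(∑ k, Q k j ^ 2)).bddAbove j
  have hsum : (WithLp.toLp 2 (Q *ᵥ v) : EuclideanSpace ℝ ι)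
      = ∑ j, v j • (WithLp.toLp 2 fun k => Q k j : EuclideanSpace ℝ ι) := by
    ext i
    simp [mulVec, dotProduct, mul_comm]
  rw [hsum, sum_mul]
  refine (norm_sum_le _ _).trans (sum_le_sum fun j _ => ?_)
  rw [norm_smul, Real.norm_of_nonneg (hv j)]
  exact mul_le_mul_of_nonneg_left (hcol j) (hv j)

theorem dotProduct_mulVec_sub_le (hQ : Q.IsSymm) {x y : EuclideanSpace ℝ ι}
    (hx : x.ofLp ∈ stdSimplex ℝ ι) (hy : y.ofLp ∈ stdSimplex ℝ ι) :
    x ⬝ᵥ Q *ᵥ x - y ⬝ᵥ Q *ᵥ y ≤ 2 * (⨆ j, √(∑ k, Q k j ^ 2)) * ‖x - y‖ := by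
  have hnorm := norm_toLp_mulVec_le (Q := Q) (v := x.ofLp + y.ofLp)
    fun j => add_nonneg (hx.1 j) (hy.1 j)
  have htwo : ∑ j, (x.ofLp + y.ofLp) j = 2 := by
    simp only [Pi.add_apply, sum_add_distrib, hx.2, hy.2, one_add_one_eq_two]
  rw [htwo] at hnorm
  calc x ⬝ᵥ Q *ᵥ x - y ⬝ᵥ Q *ᵥ y
      = inner ℝ (x - y) (WithLp.toLp 2 (Q *ᵥ (x.ofLp + y.ofLp)) : EuclideanSpace ℝ ι) := by
        rw [dotProduct_mulVec_sub_dotProduct_mulVec hQ, EuclideanSpace.inner_eq_star_dotProduct,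
          dotProduct_comm]
        simp
    _ ≤ ‖x - y‖ * ‖(WithLp.toLp 2 (Q *ᵥ (x.ofLp + y.ofLp)) : EuclideanSpace ℝ ι)‖ :=
        real_inner_le_norm _ _
    _ ≤ ‖x - y‖ * (2 * ⨆ j, √(∑ k, Q k j ^ 2)) := by gcongr
    _ = _ := mul_comm _ _

end Matrix

theorem EuclideanSpace.norm_single_sub_single_le {ι : Type*} [Fintype ι] [DecidableEq ι]
    (k j : ι) : ‖EuclideanSpace.single k (1 : ℝ) - EuclideanSpace.single j 1‖ ≤ √2 := by
  refine Real.le_sqrt_of_sq_le ?_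
  rw [norm_sub_sq_real, EuclideanSpace.inner_single_left]
  by_cases h : k = j <;> simp [h] <;> norm_num

theorem regGrid_subset_stdSimplexE (n r : ℕ) : regGrid n r ⊆ stdSimplexE n :=
  fun _ hδ => ⟨hδ.1, hδ.2.1⟩

theorem regGrid_finite (n : ℕ) {r : ℕ} (hr : 0 < r) : (regGrid n r).Finite := by
  have hr' : (r : ℝ) ≠ 0 := by positivity
  refine ((Set.Finite.pi' fun _ => (Set.finite_Iic r).image (fun m : ℕ => (m : ℝ) / r)).preimage
    (WithLp.ofLp_injective 2).injOn).subset fun δ hδ i => ?_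
  obtain ⟨m, hm⟩ := hδ.2.2 i
  have hle : δ i ≤ 1 := hδ.2.1 ▸ single_le_sum (fun k _ => hδ.1 k) (mem_univ i)
  refine ⟨m, ?_, by simp [← hm, hr']⟩
  have : (m : ℝ) ≤ r := by rw [← hm]; nlinarith [hδ.1 i]
  exact_mod_cast this

theorem single_mem_regGrid {n : ℕ} (r : ℕ) (k : Fin n) :
    EuclideanSpace.single k (1 : ℝ) ∈ regGrid n r := by
  refine ⟨fun i => ?_, by simp, fun i => ⟨if i = k then r else 0, ?_⟩⟩ <;>
    by_cases h : i = k <;> simp [h]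

theorem exists_inv_le_of_mem_regGrid {n r : ℕ} {δ : EuclideanSpace ℝ (Fin n)}
    (hδ : δ ∈ regGrid n r) : ∃ j, (r : ℝ)⁻¹ ≤ δ j := by
  obtain ⟨j, -, hj⟩ := exists_lt_of_sum_lt (s := univ) (f := fun _ => (0 : ℝ)) (g := δ.ofLp)
    (by simp [hδ.2.1])
  obtain ⟨m, hm⟩ := hδ.2.2 j
  refine ⟨j, ?_⟩
  rcases (Nat.cast_nonneg r : (0 : ℝ) ≤ r).eq_or_lt with hr | hr
  · simp [← hr, hj.le]
  have hm0 : m ≠ 0 := by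
    rintro rfl
    exact hj.ne' (by simpa [hr.ne'] using hm)
  rw [inv_le_iff_one_le_mul₀' hr, hm]
  exact_mod_cast Nat.one_le_iff_ne_zero.2 hm0

theorem add_smul_single_sub_single_mem_regGrid {n r : ℕ} (hr : 0 < r)
    {δ : EuclideanSpace ℝ (Fin n)} (hδ : δ ∈ regGrid n r) {j : Fin n} (hj : (r : ℝ)⁻¹ ≤ δ j)
    (k : Fin n) :
    δ + (r : ℝ)⁻¹ • (EuclideanSpace.single k 1 - EuclideanSpace.single j 1) ∈ regGrid n r := by
  have hr' : (r : ℝ) ≠ 0 := by positivity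
  have hr0 : (0 : ℝ) ≤ (r : ℝ)⁻¹ := by positivity
  have happly : ∀ i, (δ + (r : ℝ)⁻¹ • (EuclideanSpace.single k 1 - EuclideanSpace.single j 1) :
      EuclideanSpace ℝ (Fin n)) i
      = δ i + (if i = k then (r : ℝ)⁻¹ else 0) - (if i = j then (r : ℝ)⁻¹ else 0) := fun i => by
    simp only [PiLp.add_apply, PiLp.smul_apply, PiLp.sub_apply, PiLp.single_apply, smul_eq_mul]
    split_ifs <;> ring
  refine ⟨fun i => ?_, ?_, fun i => ?_⟩ <;> simp only [happly]
  · have := hδ.1 i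
    split_ifs with hik hij hij <;> (try subst hij) <;> linarith
  · rw [sum_sub_distrib, sum_add_distrib, hδ.2.1]
    simp
  · obtain ⟨m, hm⟩ := hδ.2.2 i
    have hm' : (r : ℝ) * (δ i + (if i = k then (r : ℝ)⁻¹ else 0) - (if i = j then (r : ℝ)⁻¹ else 0))
        = m + (if i = k then 1 else 0) - (if i = j then 1 else 0) := by
      rw [← hm]; split_ifs <;> simp [mul_add, mul_sub, hr']
    rw [hm']
    split_ifs with hik hij hij
    · exact ⟨m, by ring⟩
    · exact ⟨m + 1, by push_cast; ring⟩
    · subst hij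
      have : (1 : ℝ) ≤ m := by rw [← hm]; exact (inv_le_iff_one_le_mul₀' (by positivity)).1 hj
      exact ⟨m - 1, by rw [Nat.cast_sub (by exact_mod_cast this)]; push_cast; ring⟩
    · exact ⟨m, by ring⟩

theorem exists_subset_regGrid_ncard_eq_norm_sub_le {n r : ℕ} (hr : 0 < r)
    {δ : EuclideanSpace ℝ (Fin n)} (hδ : δ ∈ regGrid n r) :
    ∃ S ⊆ regGrid n r, S.ncard = n ∧ ∀ δ' ∈ S, ‖δ' - δ‖ ≤ √2 / r := by
  obtain ⟨j, hj⟩ := exists_inv_le_of_mem_regGrid hδ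
  set F : Fin n → EuclideanSpace ℝ (Fin n) :=
    fun k => δ + (r : ℝ)⁻¹ • (EuclideanSpace.single k 1 - EuclideanSpace.single j 1)
  have hF : Function.Injective F := fun k k' hkk' => by
    have hr' : (r : ℝ)⁻¹ ≠ 0 := by positivity
    exact EuclideanSpace.orthonormal_single.linearIndependent.injective
      (sub_left_injective (smul_right_injective _ hr' (add_left_cancel hkk')))
  refine ⟨Set.range F, ?_, ?_, ?_⟩
  · rintro _ ⟨k, rfl⟩
    exact add_smul_single_sub_single_mem_regGrid hr hδ hj k
  · rw [Set.ncard_range_of_injective hF, Nat.card_eq_fintype_card, Fintype.card_fin]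
  · rintro _ ⟨k, rfl⟩
    rw [add_sub_cancel_left, norm_smul, Real.norm_of_nonneg (by positivity), div_eq_inv_mul]
    exact mul_le_mul_of_nonneg_left (EuclideanSpace.norm_single_sub_single_le k j) (by positivity)

section Multinomial

-- `∑ f, (∏ u, x (f u)) * F f` is the expectation of `F` when the `f u` are independent draws
-- from the distribution `x`.
variable {ι κ : Type*} [Fintype ι] [DecidableEq ι] [Fintype κ] {x : κ → ℝ}

theorem sum_prod_mul_apply (hx : ∑ k, x k = 1) (s : ι) (a : κ → ℝ) :
    ∑ f : ι → κ, (∏ u, x (f u)) * a (f s) = ∑ k, x k * a k := by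
  have hprod : ∀ f : ι → κ, (∏ u, x (f u)) * a (f s)
      = ∏ u, x (f u) * if u = s then a (f u) else 1 := fun f => by
    rw [prod_mul_distrib, Fintype.prod_ite_eq']
  have hfactor : ∀ u, (∑ k, x k * if u = s then a k else 1)
      = if u = s then ∑ k, x k * a k else 1 := fun u => by
    split_ifs <;> simp [hx]
  rw [sum_congr rfl fun f _ => hprod f,
    ← Fintype.prod_sum fun u k => x k * if u = s then a k else 1,
    prod_congr rfl fun u _ => hfactor u, Fintype.prod_ite_eq']

theorem sum_prod_mul_apply_mul_apply (hx : ∑ k, x k = 1) {s t : ι} (hst : s ≠ t)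
    (a b : κ → ℝ) :
    ∑ f : ι → κ, (∏ u, x (f u)) * (a (f s) * b (f t))
      = (∑ k, x k * a k) * ∑ k, x k * b k := by
  let g : ι → κ → ℝ := fun u k => if u = s then a k else if u = t then b k else 1
  have hg : ∀ h : ι → ℝ, (∀ u, u ≠ s ∧ u ≠ t → h u = 1) → ∏ u, h u = h s * h t :=
    fun h => Fintype.prod_eq_mul s t hst
  have hprod : ∀ f : ι → κ, (∏ u, x (f u)) * (a (f s) * b (f t))
      = ∏ u, x (f u) * g u (f u) := fun f => by
    rw [prod_mul_distrib, hg (fun u => g u (f u)) fun u hu => by simp [g, hu.1, hu.2]]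
    simp [g, hst.symm]
  rw [sum_congr rfl fun f _ => hprod f, ← Fintype.prod_sum fun u k => x k * g u k,
    hg _ fun u hu => by simp [g, hu.1, hu.2, hx]]
  simp [g, hst.symm]

theorem sum_prod_mul_apply_apply (hx : ∑ k, x k = 1) (Q : Matrix κ κ ℝ) (s t : ι) :
    ∑ f : ι → κ, (∏ u, x (f u)) * Q (f s) (f t)
      = if s = t then ∑ k, x k * Q k k else x ⬝ᵥ Q *ᵥ x := by
  classical
  split_ifs with hst
  · subst hst
    exact sum_prod_mul_apply hx s fun k => Q k k
  have hrow : ∀ f : ι → κ, (∏ u, x (f u)) * Q (f s) (f t)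
      = ∑ i, (∏ u, x (f u)) * ((if f s = i then 1 else 0) * Q i (f t)) :=
    fun f => by simp
  rw [sum_congr rfl fun f _ => hrow f, sum_comm,
    sum_congr rfl fun i _ =>
      sum_prod_mul_apply_mul_apply hx hst (fun k => if k = i then 1 else 0) (Q i)]
  simp [dotProduct, mulVec, mul_comm]

end Multinomial

noncomputable def empiricalDistribution (n r : ℕ) (f : Fin r → Fin n) :
    EuclideanSpace ℝ (Fin n) :=
  (r : ℝ)⁻¹ • ∑ s, EuclideanSpace.single (f s) 1

theorem empiricalDistribution_apply {n r : ℕ} (f : Fin r → Fin n) (i : Fin n) :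
    empiricalDistribution n r f i = (r : ℝ)⁻¹ * #{s | f s = i} := by
  simp [empiricalDistribution, Pi.single_apply, sum_boole, @eq_comm _ i]

theorem empiricalDistribution_mem_regGrid {n r : ℕ} (hr : 0 < r) (f : Fin r → Fin n) :
    empiricalDistribution n r f ∈ regGrid n r := by
  have hr' : (r : ℝ) ≠ 0 := by positivity
  refine ⟨fun i => ?_, ?_, fun i => ⟨#{s | f s = i}, ?_⟩⟩ <;>
    simp only [empiricalDistribution_apply]
  · positivity
  · rw [← mul_sum]
    norm_cast
    rw [← card_eq_sum_card_fiberwise fun s _ => mem_univ (f s)]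
    simp [hr']
  · field_simp

theorem dotProduct_mulVec_empiricalDistribution {n r : ℕ} (Q : Matrix (Fin n) (Fin n) ℝ)
    (f : Fin r → Fin n) :
    empiricalDistribution n r f ⬝ᵥ Q *ᵥ empiricalDistribution n r f
      = (r : ℝ)⁻¹ ^ 2 * ∑ s, ∑ t, Q (f s) (f t) := by
  simp only [empiricalDistribution, WithLp.ofLp_smul, WithLp.ofLp_sum, PiLp.ofLp_single,
    mulVec_smul, mulVec_sum, mulVec_single, MulOpposite.op_one, one_smul, dotProduct_smul,
    dotProduct_sum, smul_dotProduct, sum_dotProduct, single_dotProduct, col_apply, one_mul,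
    smul_eq_mul, mul_sum, sq]
  rw [sum_comm]
  simp only [mul_assoc]

theorem sum_prod_mul_dotProduct_mulVec_empiricalDistribution {n r : ℕ} (hr : 0 < r)
    (Q : Matrix (Fin n) (Fin n) ℝ) {x : Fin n → ℝ} (hx : ∑ k, x k = 1) :
    ∑ f : Fin r → Fin n, (∏ u, x (f u)) *
        (empiricalDistribution n r f ⬝ᵥ Q *ᵥ empiricalDistribution n r f)
      = (r : ℝ)⁻¹ * ∑ k, x k * Q k k + (1 - (r : ℝ)⁻¹) * (x ⬝ᵥ Q *ᵥ x) := by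
  have hr' : (r : ℝ) ≠ 0 := by positivity
  have hite : ∀ s t : Fin r, (if s = t then ∑ k, x k * Q k k else x ⬝ᵥ Q *ᵥ x)
      = x ⬝ᵥ Q *ᵥ x + if s = t then ∑ k, x k * Q k k - x ⬝ᵥ Q *ᵥ x else 0 := fun s t => by
    split_ifs <;> ring
  calc ∑ f : Fin r → Fin n, (∏ u, x (f u)) *
        (empiricalDistribution n r f ⬝ᵥ Q *ᵥ empiricalDistribution n r f)
      = (r : ℝ)⁻¹ ^ 2 * ∑ s, ∑ t, ∑ f : Fin r → Fin n, (∏ u, x (f u)) * Q (f s) (f t) := by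
        simp only [dotProduct_mulVec_empiricalDistribution, mul_sum]
        rw [sum_comm]
        refine sum_congr rfl fun s _ => ?_
        rw [sum_comm]
        exact sum_congr rfl fun t _ => sum_congr rfl fun f _ => by ring
    _ = (r : ℝ)⁻¹ ^ 2 * ∑ s : Fin r, ∑ t : Fin r,
          if s = t then ∑ k, x k * Q k k else x ⬝ᵥ Q *ᵥ x := by
        simp only [sum_prod_mul_apply_apply hx]
    _ = _ := by
        simp only [hite, sum_add_distrib, sum_ite_eq, sum_const, card_univ, Fintype.card_fin,
          mem_univ, if_true, nsmul_eq_mul]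
        field_simp
        ring

/-- The paper's `γ(Q)`. -/
noncomputable def simplexMin {n : ℕ} (Q : Matrix (Fin n) (Fin n) ℝ) : ℝ :=
  sInf ((fun δ : EuclideanSpace ℝ (Fin n) => δ ⬝ᵥ Q *ᵥ δ) '' stdSimplexE n)

theorem le_of_forall_mem_regGrid_le {n r : ℕ} (hr : 0 < r) (Q : Matrix (Fin n) (Fin n) ℝ)
    {x : Fin n → ℝ} (hx : x ∈ stdSimplex ℝ (Fin n)) {b : ℝ}
    (hb : ∀ δ ∈ regGrid n r, b ≤ δ ⬝ᵥ Q *ᵥ δ) :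
    b ≤ (r : ℝ)⁻¹ * ∑ k, x k * Q k k + (1 - (r : ℝ)⁻¹) * (x ⬝ᵥ Q *ᵥ x) := by
  have hweights : ∑ f : Fin r → Fin n, ∏ u, x (f u) = 1 := by
    rw [← Fintype.prod_sum fun _ k => x k, hx.2, prod_const_one]
  calc b = ∑ f : Fin r → Fin n, (∏ u, x (f u)) * b := by rw [← sum_mul, hweights, one_mul]
    _ ≤ ∑ f : Fin r → Fin n, (∏ u, x (f u)) *
          (empiricalDistribution n r f ⬝ᵥ Q *ᵥ empiricalDistribution n r f) :=
        sum_le_sum fun f _ => mul_le_mul_of_nonneg_left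
          (hb _ (empiricalDistribution_mem_regGrid hr f)) (prod_nonneg fun u _ => hx.1 _)
    _ = _ := sum_prod_mul_dotProduct_mulVec_empiricalDistribution hr Q hx.2

theorem sub_simplexMin_le_of_forall_mem_regGrid_le {n r : ℕ} (hr : 0 < r)
    (Q : Matrix (Fin n) (Fin n) ℝ) (hne : (stdSimplexE n).Nonempty)
    {b : ℝ} (hb : ∀ δ ∈ regGrid n r, b ≤ δ ⬝ᵥ Q *ᵥ δ) :
    b - simplexMin Q ≤ (r : ℝ)⁻¹ * ((⨆ k, Q k k) - simplexMin Q) := by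
  have hc : 0 ≤ 1 - (r : ℝ)⁻¹ := sub_nonneg.2 (inv_le_one_of_one_le₀ (by exact_mod_cast hr))
  have hdiag : ∀ x ∈ stdSimplex ℝ (Fin n), ∑ k, x k * Q k k ≤ ⨆ k, Q k k := fun x hx =>
    calc ∑ k, x k * Q k k ≤ ∑ k, x k * ⨆ k, Q k k :=
          sum_le_sum fun k _ => mul_le_mul_of_nonneg_left
            (le_ciSup (Set.finite_range fun k => Q k k).bddAbove k) (hx.1 k)
      _ = ⨆ k, Q k k := by rw [← sum_mul, hx.2, one_mul]
  have hinf : b - (r : ℝ)⁻¹ * ⨆ k, Q k k ≤ (1 - (r : ℝ)⁻¹) * simplexMin Q := by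
    rw [simplexMin, ← smul_eq_mul (1 - (r : ℝ)⁻¹), ← Real.sInf_smul_of_nonneg hc]
    refine le_csInf ((hne.image _).smul_set) ?_
    rintro _ ⟨_, ⟨x, hx, rfl⟩, rfl⟩
    have := le_of_forall_mem_regGrid_le hr Q hx hb
    have := mul_le_mul_of_nonneg_left (hdiag x hx) (inv_nonneg.2 (Nat.cast_nonneg r))
    simp only [smul_eq_mul]
    linarith
  linarith

theorem uniformGrid_eq_uniformOn (n r : ℕ) : uniformGrid n r = uniformOn (regGrid n r) := rfl

theorem uniformOn_apply_of_subset {Ω : Type*} [MeasurableSpace Ω] [MeasurableSingletonClass Ω]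
    {G S : Set Ω} (hG : G.Finite) (hGne : G.Nonempty) (hSG : S ⊆ G) :
    uniformOn G S = ENNReal.ofReal (S.ncard / G.ncard) := by
  rw [uniformOn, cond_apply hG.measurableSet, Set.inter_eq_right.2 hSG,
    Measure.count_apply_finite _ hG, Measure.count_apply_finite _ (hG.subset hSG),
    ← Set.ncard_eq_toFinset_card _ hG, ← Set.ncard_eq_toFinset_card _ (hG.subset hSG),
    ENNReal.ofReal_div_of_pos, ENNReal.ofReal_natCast, ENNReal.ofReal_natCast,
    ENNReal.div_eq_inv_mul]
  exact_mod_cast (Set.ncard_pos hG).2 hGne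

theorem pow_le_of_log_div_log_le {c φ : ℝ} (hc0 : 0 ≤ c) (hc1 : c < 1) (hφ : 0 < φ) {M : ℕ}
    (hM : 0 < M) (h : Real.log φ / Real.log c ≤ M) : c ^ M ≤ φ := by
  rcases hc0.eq_or_lt with rfl | hc
  · simp [zero_pow hM.ne', hφ.le]
  rw [← Real.log_le_log_iff (pow_pos hc M) hφ, Real.log_pow]
  exact (div_le_iff_of_neg (Real.log_neg hc hc1)).1 h

theorem ofReal_one_sub_le_pi_uniformOn_exists_mem {Ω : Type*} [MeasurableSpace Ω]
    [MeasurableSingletonClass Ω] {G S : Set Ω} (hG : G.Finite) (hSG : S ⊆ G) (hS : S.Nonempty)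
    {φ : ℝ} (hφ : 0 < φ) {M : ℕ} (hM0 : 0 < M)
    (hM : Real.log φ / Real.log (1 - S.ncard / G.ncard) ≤ M) :
    ENNReal.ofReal (1 - φ) ≤
      Measure.pi (fun _ : Fin M => uniformOn G) {ω | ∃ i, ω i ∈ S} := by
  have hGne : G.Nonempty := hS.mono hSG
  have := isProbabilityMeasure_uniformOn hG hGne
  have hSm : MeasurableSet S := (hG.subset hSG).measurableSet
  have hSpos : (0 : ℝ) < S.ncard := by exact_mod_cast (Set.ncard_pos (hG.subset hSG)).2 hS
  have hSG_card : (S.ncard : ℝ) ≤ G.ncard := by exact_mod_cast Set.ncard_le_ncard hSG hG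
  have hp : (S.ncard / G.ncard : ℝ) ≤ 1 := div_le_one_of_le₀ hSG_card (Nat.cast_nonneg _)
  have hmiss : (1 - S.ncard / G.ncard : ℝ) ^ M ≤ φ :=
    pow_le_of_log_div_log_le (sub_nonneg.2 hp)
      (sub_lt_self _ (div_pos hSpos (hSpos.trans_le hSG_card))) hφ hM0 hM
  have hcompl : {ω : Fin M → Ω | ∃ i, ω i ∈ S} = (Set.univ.pi fun _ => Sᶜ)ᶜ := by
    ext ω; simp
  have hmiss_one : uniformOn G Sᶜ = ENNReal.ofReal (1 - S.ncard / G.ncard) := by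
    rw [prob_compl_eq_one_sub hSm, uniformOn_apply_of_subset hG hGne hSG,
      ENNReal.ofReal_sub _ (by positivity), ENNReal.ofReal_one]
  rw [hcompl, prob_compl_eq_one_sub (MeasurableSet.univ_pi fun _ => hSm.compl), Measure.pi_pi,
    prod_const, card_univ, Fintype.card_fin, hmiss_one, ← ENNReal.ofReal_pow (by linarith),
    ← ENNReal.ofReal_one, ← ENNReal.ofReal_sub _ (pow_nonneg (by linarith) _)]
  exact ENNReal.ofReal_le_ofReal (by linarith)

theorem one_div_mul_add_le_div_add_one_mul {a D ε r : ℝ} (ha : 0 ≤ a) (hD : 0 < D) (hε : 0 < ε)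
    (hr : r ≥ 1 / ε * D) : 1 / r * (a + D) ≤ (a / D + 1) * ε := by
  have hr0 : 0 < r := lt_of_lt_of_le (by positivity) hr
  rw [ge_iff_le, one_div_mul_eq_div, div_le_iff₀ hε] at hr
  calc 1 / r * (a + D) ≤ ε / D * (a + D) := by
        refine mul_le_mul_of_nonneg_right ?_ (by positivity)
        rw [div_le_div_iff₀ hr0 hD]
        linarith
    _ = (a / D + 1) * ε := by field_simp

theorem exists_subset_regGrid_ncard_eq_sub_simplexMin_le {n r : ℕ} (hn : 0 < n) (hr : 0 < r)
    {Q : Matrix (Fin n) (Fin n) ℝ} (hQ : Q.IsSymm) {L : ℝ}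
    (hL : ∀ x ∈ stdSimplexE n, L ≤ x ⬝ᵥ Q *ᵥ x) :
    ∃ S ⊆ regGrid n r, S.ncard = n ∧ ∀ δ ∈ S,
      δ ⬝ᵥ Q *ᵥ δ - simplexMin Q
        ≤ (r : ℝ)⁻¹ * (√2 * (2 * ⨆ j, √(∑ k, Q k j ^ 2)) + (⨆ k, Q k k) - L) := by
  set K := 2 * ⨆ j, √(∑ k, Q k j ^ 2)
  have hK : 0 ≤ K := mul_nonneg zero_le_two (Real.iSup_nonneg fun _ => Real.sqrt_nonneg _)
  have hgrid : (regGrid n r).Nonempty := ⟨_, single_mem_regGrid r ⟨0, hn⟩⟩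
  obtain ⟨δ₀, hδ₀, hmin⟩ := Set.exists_min_image _
    (fun δ : EuclideanSpace ℝ (Fin n) => δ ⬝ᵥ Q *ᵥ δ) (regGrid_finite n hr) hgrid
  have hne : (stdSimplexE n).Nonempty := hgrid.mono (regGrid_subset_stdSimplexE n r)
  have hLγ : L ≤ simplexMin Q :=
    le_csInf (hne.image _) (by rintro _ ⟨x, hx, rfl⟩; exact hL x hx)
  have hδ₀γ : δ₀ ⬝ᵥ Q *ᵥ δ₀ - simplexMin Q ≤ (r : ℝ)⁻¹ * ((⨆ k, Q k k) - simplexMin Q) :=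
    sub_simplexMin_le_of_forall_mem_regGrid_le hr Q hne hmin
  obtain ⟨S, hSG, hSn, hSnorm⟩ := exists_subset_regGrid_ncard_eq_norm_sub_le hr hδ₀
  refine ⟨S, hSG, hSn, fun δ hδ => ?_⟩
  have hlip := dotProduct_mulVec_sub_le hQ (regGrid_subset_stdSimplexE n r (hSG hδ))
    (regGrid_subset_stdSimplexE n r hδ₀)
  have hnorm := mul_le_mul_of_nonneg_left (hSnorm δ hδ) hK
  have hγ := mul_le_mul_of_nonneg_left hLγ (inv_nonneg.2 (Nat.cast_nonneg r))
  rw [mul_div_assoc', div_eq_inv_mul] at hnorm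
  linarith

theorem stmt10_general {n : ℕ} (hn : 2 ≤ n)
    (Q : Matrix (Fin n) (Fin n) ℝ) (hQsymm : Q.IsSymm)
    (mQ : ℝ) (hmQ : mQ = ⨅ p : {p : Fin n × Fin n // p.1 ≤ p.2}, Q p.1.1 p.1.2)
    (hdiag : ∀ k, mQ < Q k k)
    (γlow : ℝ) (hγlow : γlow = mQ + (∑ k, (Q k k - mQ)⁻¹)⁻¹)
    (K γQ : ℝ)
    (hK : K = 2 * ⨆ i : Fin n, Real.sqrt (∑ k, (Q k i) ^ 2))
    (hγ : γQ = sInf ((fun δ : EuclideanSpace ℝ (Fin n) => δ ⬝ᵥ Q.mulVec δ) '' stdSimplexE n))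
    (r : ℕ) (hr : 2 ≤ r)
    (φ : ℝ) (hφ0 : 0 < φ)
    (M : ℕ) (hM0 : 0 < M)
    (hM : (M : ℝ) ≥
      Real.log φ / Real.log (1 - (n : ℝ) / ((regGrid n r).ncard : ℝ))) :
    ENNReal.ofReal (1 - φ) ≤
      Measure.pi (fun _ : Fin M => uniformGrid n r)
        {ω : Fin M → EuclideanSpace ℝ (Fin n) |
          (⨅ i : Fin M, (ω i) ⬝ᵥ Q.mulVec (ω i)) - γQ ≤
            (1 / (r : ℝ)) * (Real.sqrt 2 * K + (⨆ k : Fin n, Q k k) - γlow)} ∧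
    ∀ ε : ℝ, 0 < ε → 0 < (⨆ k : Fin n, Q k k) - γlow →
      (r : ℝ) ≥ (1 / ε) * ((⨆ k : Fin n, Q k k) - γlow) →
      ENNReal.ofReal (1 - φ) ≤
        Measure.pi (fun _ : Fin M => uniformGrid n r)
          {ω : Fin M → EuclideanSpace ℝ (Fin n) |
            (⨅ i : Fin M, (ω i) ⬝ᵥ Q.mulVec (ω i)) - γQ ≤
              (Real.sqrt 2 * K / ((⨆ k : Fin n, Q k k) - γlow) + 1) * ε} := by
  have hL : ∀ x ∈ stdSimplexE n, γlow ≤ x ⬝ᵥ Q *ᵥ x := fun x hx =>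
    hγlow ▸ add_inv_sum_inv_le_dotProduct_mulVec (fun i j => hmQ ▸ hQsymm.iInf_le i j) hdiag hx
  obtain ⟨S, hSG, hSn, hS⟩ :=
    exists_subset_regGrid_ncard_eq_sub_simplexMin_le (r := r) (by omega) (by omega) hQsymm hL
  have hprob : ENNReal.ofReal (1 - φ) ≤
      Measure.pi (fun _ : Fin M => uniformGrid n r) {ω | ∃ i, ω i ∈ S} := by
    rw [uniformGrid_eq_uniformOn]
    exact ofReal_one_sub_le_pi_uniformOn_exists_mem (regGrid_finite n (by omega)) hSG
      (Set.nonempty_of_ncard_ne_zero (by omega)) hφ0 hM0 (by rwa [hSn])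
  have hbound : {ω : Fin M → EuclideanSpace ℝ (Fin n) | ∃ i, ω i ∈ S} ⊆
      {ω | (⨅ i : Fin M, (ω i) ⬝ᵥ Q.mulVec (ω i)) - γQ ≤
        (1 / (r : ℝ)) * (Real.sqrt 2 * K + (⨆ k : Fin n, Q k k) - γlow)} := by
    rintro ω ⟨i, hi⟩
    have := ciInf_le (Set.finite_range fun i => (ω i) ⬝ᵥ Q.mulVec (ω i)).bddBelow i
    rw [Set.mem_ofPred_eq, one_div, hγ, hK]
    exact (sub_le_sub_right this _).trans (hS _ hi)
  refine ⟨hprob.trans (measure_mono hbound), fun ε hε hD hrε =>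
    hprob.trans (measure_mono (hbound.trans fun ω hω => ?_))⟩
  have hK0 : 0 ≤ K := hK ▸ mul_nonneg zero_le_two (Real.iSup_nonneg fun _ => Real.sqrt_nonneg _)
  have := one_div_mul_add_le_div_add_one_mul (mul_nonneg (Real.sqrt_nonneg 2) hK0) hD hε hrε
  simp only [Set.mem_ofPred_eq, add_sub_assoc] at hω ⊢
  linarith

theorem stmt10 {n : ℕ} (hn : 2 ≤ n)
    (Q : Matrix (Fin n) (Fin n) ℝ) (hQsymm : Q.IsSymm)
    (mQ : ℝ) (hmQ : mQ = ⨅ p : {p : Fin n × Fin n // p.1 ≤ p.2}, Q p.1.1 p.1.2)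
    (hdiag : ∀ k, mQ < Q k k)
    (γlow : ℝ) (hγlow : γlow = mQ + (∑ k, (Q k k - mQ)⁻¹)⁻¹)
    (K γQ : ℝ)
    (hK : K = 2 * ⨆ i : Fin n, Real.sqrt (∑ k, (Q k i) ^ 2))
    (hγ : γQ = sInf ((fun δ : EuclideanSpace ℝ (Fin n) => δ ⬝ᵥ Q.mulVec δ) '' stdSimplexE n))
    (r : ℕ) (hr : 2 ≤ r)
    (φ : ℝ) (hφ0 : 0 < φ) (hφ1 : φ < 1)
    (M : ℕ) (hM0 : 0 < M)
    (hM : (M : ℝ) ≥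
      Real.log φ / Real.log (1 - (n : ℝ) / ((regGrid n r).ncard : ℝ))) :
    ENNReal.ofReal (1 - φ) ≤
      Measure.pi (fun _ : Fin M => uniformGrid n r)
        {ω : Fin M → EuclideanSpace ℝ (Fin n) |
          (⨅ i : Fin M, (ω i) ⬝ᵥ Q.mulVec (ω i)) - γQ ≤
            (1 / (r : ℝ)) * (Real.sqrt 2 * K + (⨆ k : Fin n, Q k k) - γlow)} ∧
    ∀ ε : ℝ, 0 < ε → 0 < (⨆ k : Fin n, Q k k) - γlow →
      (r : ℝ) ≥ (1 / ε) * ((⨆ k : Fin n, Q k k) - γlow) →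
      ENNReal.ofReal (1 - φ) ≤
        Measure.pi (fun _ : Fin M => uniformGrid n r)
          {ω : Fin M → EuclideanSpace ℝ (Fin n) |
            (⨅ i : Fin M, (ω i) ⬝ᵥ Q.mulVec (ω i)) - γQ ≤
              (Real.sqrt 2 * K / ((⨆ k : Fin n, Q k k) - γlow) + 1) * ε} :=
  stmt10_general hn Q hQsymm mQ hmQ hdiag γlow hγlow K γQ hK hγ r hr φ hφ0 M hM0 hM
end
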